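/- arXiv:1809.07382 — 3 statements merged into one kernel-verified Lean document; each statement's English description precedes it below -/
import Mathlib

section
/- If G is an (n−k)-regular (a, k−2)-distance antimagic graph on n vertices with 2 ≤ k ≤ (1+√(8n−7))/2, then the join G + K_1 is a non-regular (a+n+1, k−2)-distance antimagic graph on n+1 vertices (for k > 2, witnessed by extending the labeling of G by assigning label n+1 to the new vertex). -/
open scoped Classical
open Finset

/-- Weight of a vertex: sum of labels over its open neighborhood. -/
noncomputable def wsum {V : Type*} [Fintype V] (G : SimpleGraph V) (f : V → ℕ) (u : V) : ℕ :=
  ∑ v ∈ Finset.univ.filter (fun v => G.Adj u v), f v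

/-- A graph is distance magic if some bijective labeling by 1,...,n has constant weights. -/
def IsDistanceMagic {V : Type*} [Fintype V] (G : SimpleGraph V) : Prop :=
  ∃ (f : V ≃ Fin (Fintype.card V)) (c : ℕ),
    ∀ u, wsum G (fun v => (f v : ℕ) + 1) u = c

/-- `G` is `r`-regular. -/
def IsRegularDeg {V : Type*} [Fintype V] (G : SimpleGraph V) (r : ℕ) : Prop :=
  ∀ u : V, (Finset.univ.filter (fun v => G.Adj u v)).card = r

/-- `(a,d)`-distance antimagic: some bijective labeling by 1,...,n has weight set
`{a, a+d, ..., a+(n-1)d}`. -/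
def IsDistAntimagic {V : Type*} [Fintype V] (G : SimpleGraph V) (a d : ℕ) : Prop :=
  ∃ f : V ≃ Fin (Fintype.card V),
    Finset.image (fun u => wsum G (fun v => (f v : ℕ) + 1) u) Finset.univ
      = Finset.image (fun i : Fin (Fintype.card V) => a + (i : ℕ) * d) Finset.univ

/-- Circulant graph on `N` vertices with jumps `1,...,m` (so `H_{2m,N} = C_N^m`). -/
def circulant (N m : ℕ) : SimpleGraph (Fin N) :=
  SimpleGraph.fromRel (fun i j => ∃ k, 1 ≤ k ∧ k ≤ m ∧ ((i : ℕ) + k) % N = (j : ℕ))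

/-- The graph `(K_{n-1} - M) + K_1`: vertex `0` joined to all, and vertices `1,...,n-1`
forming a complete graph minus the perfect matching pairing `i` with `i + (n-1)/2 (mod n-1)`. -/
def calG (n : ℕ) : SimpleGraph (Fin n) :=
  SimpleGraph.fromRel (fun i j =>
    (i : ℕ) = 0 ∨ (j : ℕ) = 0 ∨
      ¬ (((i : ℕ) - 1 + (n - 1) / 2) % (n - 1) = (j : ℕ) - 1))

/-- Lexicographic product `G ∘ H`. -/
def lexProd {α β : Type*} (G : SimpleGraph α) (H : SimpleGraph β) : SimpleGraph (α × β) where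
  Adj x y := G.Adj x.1 y.1 ∨ (x.1 = y.1 ∧ H.Adj x.2 y.2)
  symm := by
    constructor
    rintro ⟨a, b⟩ ⟨c, d⟩ (h | ⟨h1, h2⟩)
    · exact Or.inl h.symm
    · exact Or.inr ⟨h1.symm, h2.symm⟩
  loopless := by
    constructor
    rintro ⟨a, b⟩ (h | ⟨-, h⟩)
    · exact G.loopless.irrefl a h
    · exact H.loopless.irrefl b h

/-- Direct (tensor) product `G × H`. -/
def tensorProd {α β : Type*} (G : SimpleGraph α) (H : SimpleGraph β) : SimpleGraph (α × β) where
  Adj x y := G.Adj x.1 y.1 ∧ H.Adj x.2 y.2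
  symm := ⟨fun _ _ h => ⟨h.1.symm, h.2.symm⟩⟩
  loopless := ⟨fun x h => G.loopless.irrefl x.1 h.1⟩

/-- The Harary graph `H_{3,n}`. -/
noncomputable def harary3 (n : ℕ) : SimpleGraph (Fin n) :=
  circulant n 1 ⊔ SimpleGraph.fromRel (fun i j =>
    if n % 2 = 0 then
      ∃ k, 1 ≤ k ∧ k ≤ n / 2 ∧ (i : ℕ) = k ∧ (j : ℕ) = (k + n / 2) % n
    else
      ((i : ℕ) = 0 ∧ ((j : ℕ) = (n - 1) / 2 ∨ (j : ℕ) = (n + 1) / 2)) ∨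
      (∃ k, 1 ≤ k ∧ k < (n - 1) / 2 ∧ (i : ℕ) = k ∧ (j : ℕ) = (k + (n + 1) / 2) % n))

/-- The Harary graph `H_{2n+1,2n+3}`: `C_{2n+3}^n` together with edges `v_0 v_{n+1}`,
`v_0 v_{n+2}` and `v_i v_{i+n+2}` for `1 ≤ i < n+1`. -/
def hararyOdd (n : ℕ) : SimpleGraph (Fin (2 * n + 3)) :=
  circulant (2 * n + 3) n ⊔ SimpleGraph.fromRel (fun i j =>
    ((i : ℕ) = 0 ∧ ((j : ℕ) = n + 1 ∨ (j : ℕ) = n + 2)) ∨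
    (∃ k, 1 ≤ k ∧ k < n + 1 ∧ (i : ℕ) = k ∧ (j : ℕ) = k + n + 2))

/-- The Harary graph `H_{4n+1,4n+4}`: circulant with jumps `1,...,2n` and `2n+2`. -/
def harary41 (n : ℕ) : SimpleGraph (Fin (4 * n + 4)) :=
  SimpleGraph.fromRel (fun i j =>
    ∃ k, ((1 ≤ k ∧ k ≤ 2 * n) ∨ k = 2 * n + 2) ∧ ((i : ℕ) + k) % (4 * n + 4) = (j : ℕ))

/-- The join `G + K_1`. -/
def joinK1 {V : Type*} (G : SimpleGraph V) : SimpleGraph (V ⊕ Unit) :=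
  SimpleGraph.fromRel (fun x y =>
    match x, y with
    | Sum.inl a, Sum.inl b => G.Adj a b
    | Sum.inl _, Sum.inr _ => True
    | Sum.inr _, _ => False)


/-! Let `G` be `r`-regular on `n` vertices, `r = n - k`, with labelling `f` realising the weights
`a, a + d, …, a + (n - 1)d`, `d = k - 2`. Counting every label once per neighbour,
`r · n(n+1)/2 = n·a + d · n(n-1)/2`; with `r + d + 2 = n` this says exactly
`0 + 1 + ⋯ + (n - 1) = a + 1 + n·d`.

In `G + K₁` give the apex the label `n + 1`. Every old weight grows by `n + 1`, and the apex sees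
every old vertex, so its weight is `n(n+1)/2 = a + (n + 1) + n·d`: the next term of the shifted
progression. The apex has degree `n`, every other vertex degree `r + 1 = n - k + 1 < n`. -/

section

variable {V : Type*} (G : SimpleGraph V)

@[simp] lemma joinK1_adj_inl_inl {v w : V} : (joinK1 G).Adj (.inl v) (.inl w) ↔ G.Adj v w := by
  simp only [joinK1, SimpleGraph.fromRel_adj, ne_eq, Sum.inl.injEq, G.adj_comm w v, or_self,
    and_iff_right_iff_imp]
  exact G.ne_of_adj

@[simp] lemma joinK1_adj_inl_inr (v : V) (u : Unit) : (joinK1 G).Adj (.inl v) (.inr u) := by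
  simp [joinK1]

@[simp] lemma joinK1_adj_inr_inl (u : Unit) (v : V) : (joinK1 G).Adj (.inr u) (.inl v) :=
  (joinK1_adj_inl_inr G v u).symm

variable [Fintype V]

lemma card_filter_joinK1_adj_inl (v : V) :
    #{x | (joinK1 G).Adj (.inl v) x} = #{w | G.Adj v w} + 1 := by
  rw [card_filter, Fintype.sum_sum_type]
  simp

lemma card_filter_joinK1_adj_inr (u : Unit) :
    #{x | (joinK1 G).Adj (.inr u) x} = Fintype.card V := by
  rw [card_filter, Fintype.sum_sum_type]
  simp

lemma not_isRegularDeg_joinK1 [Nonempty V] {r : ℕ} (hreg : IsRegularDeg G r)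
    (hr : r + 1 ≠ Fintype.card V) : ¬ ∃ s, IsRegularDeg (joinK1 G) s := by
  rintro ⟨s, hs⟩
  obtain ⟨v⟩ := ‹Nonempty V›
  have hv := hs (.inl v)
  have hu := hs (.inr ())
  rw [card_filter_joinK1_adj_inl, hreg v] at hv
  rw [card_filter_joinK1_adj_inr] at hu
  omega

lemma wsum_joinK1_inl (f : V ⊕ Unit → ℕ) (v : V) :
    wsum (joinK1 G) f (.inl v) = wsum G (f ∘ .inl) v + f (.inr ()) := by
  simp [wsum, sum_filter, Fintype.sum_sum_type]

lemma wsum_joinK1_inr (f : V ⊕ Unit → ℕ) (u : Unit) :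
    wsum (joinK1 G) f (.inr u) = ∑ v, f (.inl v) := by
  simp [wsum, sum_filter, Fintype.sum_sum_type]

lemma sum_wsum_of_isRegularDeg {r : ℕ} (hreg : IsRegularDeg G r) (f : V → ℕ) :
    ∑ u, wsum G f u = r * ∑ v, f v := by
  simp only [wsum, sum_filter]
  rw [sum_comm, mul_sum]
  refine sum_congr rfl fun v _ => ?_
  simp_rw [G.adj_comm _ v, ← sum_filter, sum_const, hreg v, smul_eq_mul]

end

lemma Equiv.sum_val_add_one {α : Type*} [Fintype α] {n : ℕ} (f : α ≃ Fin n) :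
    ∑ x, ((f x : ℕ) + 1) = ∑ i ∈ range n, i + n := by
  rw [f.sum_comp (fun i => (i : ℕ) + 1), Fin.sum_univ_eq_sum_range (· + 1), sum_add_distrib,
    sum_const, card_range, smul_eq_mul, mul_one]

lemma Finset.sum_univ_eq_of_image_univ_eq {α β M : Type*} [Fintype α] [Fintype β]
    [AddCommMonoid M] [DecidableEq M] {f : α → M} {g : β → M} (hg : Function.Injective g)
    (hcard : Fintype.card α = Fintype.card β) (h : univ.image f = univ.image g) :
    ∑ x, f x = ∑ y, g y := by
  have hf : Set.InjOn f (univ : Finset α) := by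
    rw [← card_image_iff, h, card_image_of_injective _ hg, card_univ, card_univ, hcard]
  calc ∑ x, f x = ∑ y ∈ univ.image f, y := (sum_image (f := id) hf).symm
    _ = ∑ y, g y := by rw [h, sum_image hg.injOn]

section

variable {V : Type*} [Fintype V] {G : SimpleGraph V}

lemma sum_eq_of_image_univ_eq_arith {W : V → ℕ} {a d : ℕ}
    (h : univ.image W = univ.image fun i : Fin (Fintype.card V) => a + i * d) :
    ∑ u, W u = Fintype.card V * a + d * ∑ i ∈ range (Fintype.card V), i := by
  rcases Nat.eq_zero_or_pos d with rfl | hd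
  · have hW : ∀ u, W u = a := fun u => by
      have hu := h ▸ mem_image_of_mem W (mem_univ u)
      simp only [mul_zero, add_zero, mem_image, mem_univ, true_and] at hu
      obtain ⟨-, hi⟩ := hu
      exact hi.symm
    simp [hW]
  · have hinj : Function.Injective fun i : Fin (Fintype.card V) => a + i * d :=
      fun i j hij => Fin.ext (Nat.eq_of_mul_eq_mul_right hd (Nat.add_left_cancel hij))
    rw [sum_univ_eq_of_image_univ_eq hinj (Fintype.card_fin _).symm h, sum_add_distrib,
      Fin.sum_univ_eq_sum_range (fun i => i * d), mul_sum]
    simp [mul_comm]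

lemma IsDistAntimagic.sum_range_eq {r a d : ℕ} (hreg : IsRegularDeg G r)
    (h : IsDistAntimagic G a d) (hN : r + d + 2 = Fintype.card V) :
    ∑ i ∈ range (Fintype.card V), i = a + 1 + Fintype.card V * d := by
  obtain ⟨f, hf⟩ := h
  have hdouble := sum_wsum_of_isRegularDeg G hreg fun v => (f v : ℕ) + 1
  rw [sum_eq_of_image_univ_eq_arith hf, f.sum_val_add_one] at hdouble
  have hT := sum_range_id_mul_two (Fintype.card V)
  generalize ∑ i ∈ range (Fintype.card V), i = T at hdouble hT ⊢
  generalize Fintype.card V = N at hdouble hT hN ⊢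
  subst hN
  rw [show r + d + 2 - 1 = r + d + 1 by omega] at hT
  apply (Nat.eq_of_mul_eq_mul_left (by omega : 0 < r + d + 2) _).symm
  zify at hT hdouble ⊢
  linear_combination hdouble - (d + 1) * hT

lemma IsDistAntimagic.joinK1 {a d : ℕ} (h : IsDistAntimagic G a d)
    (hsum : ∑ i ∈ range (Fintype.card V), i = a + 1 + Fintype.card V * d) :
    IsDistAntimagic (joinK1 G) (a + Fintype.card V + 1) d := by
  obtain ⟨f, hf⟩ := h
  have hcard : Fintype.card (V ⊕ Unit) = Fintype.card V + 1 := by simp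
  let F : V ⊕ Unit ≃ Fin (Fintype.card (V ⊕ Unit)) :=
    ((f.sumCongr (Equiv.ofUnique Unit (Fin 1))).trans finSumFinEquiv).trans (finCongr hcard.symm)
  have hFl : ∀ v, (F (.inl v) : ℕ) = f v := fun v => by simp [F]
  have hFr : (F (.inr ()) : ℕ) = Fintype.card V := by simp [F]
  refine ⟨F, ?_⟩
  ext x
  have hshift := congrArg (fun s => x ∈ s.image (· + (Fintype.card V + 1))) hf
  simp only [image_image, mem_image, mem_univ, true_and, Fin.exists_iff, Function.comp_def] at hshift
  simp only [mem_image, mem_univ, true_and, Sum.exists, Unique.exists_iff, Fin.exists_iff, hcard,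
    Nat.exists_lt_succ_right', wsum_joinK1_inl, wsum_joinK1_inr, Function.comp_def, hFl, hFr]
  rw [f.sum_val_add_one, hsum, hshift]
  refine or_congr (exists_congr fun i => exists_congr fun _ => ?_) ?_ <;> ring_nf

end

lemma Nat.le_of_two_mul_sub_one_sq_le {k n : ℕ} (hk : 2 ≤ k) (h : (2 * k - 1) ^ 2 ≤ 8 * n - 7) :
    k ≤ n := by
  obtain ⟨j, rfl⟩ : ∃ j, k = j + 2 := ⟨k - 2, by omega⟩
  rw [show 2 * (j + 2) - 1 = 2 * j + 3 by omega] at h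
  have h9 : 9 ≤ (2 * j + 3) ^ 2 := by nlinarith
  have h' : (2 * j + 3) ^ 2 + 7 ≤ 8 * n := by omega
  nlinarith

/-- if G is (n-k)-regular and (a, k-2)-distance antimagic with
2 ≤ k ≤ (1+√(8n-7))/2, then G + K_1 is a non-regular (a+n+1, k-2)-distance antimagic
graph on n+1 vertices. -/
theorem join_K1_antimagic {V : Type*} [Fintype V] (n k : ℕ) (hV : Fintype.card V = n)
    (hk2 : 2 ≤ k) (hkn : (2 * k - 1) ^ 2 ≤ 8 * n - 7)
    (G : SimpleGraph V) (hreg : IsRegularDeg G (n - k)) (a : ℕ)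
    (h : IsDistAntimagic G a (k - 2)) :
    Fintype.card (V ⊕ Unit) = n + 1 ∧
    (¬ ∃ r, IsRegularDeg (joinK1 G) r) ∧
    IsDistAntimagic (joinK1 G) (a + n + 1) (k - 2) := by
  subst hV
  have hkV := Nat.le_of_two_mul_sub_one_sq_le hk2 hkn
  have : Nonempty V := Fintype.card_pos_iff.mp (by omega)
  refine ⟨by simp, not_isRegularDeg_joinK1 G hreg (by omega), ?_⟩
  exact h.joinK1 (h.sum_range_eq hreg (by omega))
end

section
/- For n odd with n ≥ 3, the graph G = (K_{n−1} − M) + K_1 on n vertices (join of a vertex to K_{n−1} minus a perfect matching) is distance magic; conversely, any graph G on n vertices with maximum degree Δ(G) = n−1 is distance magic if and only if n is odd and G is isomorphic to (K_{n−1} − M) + K_1. -/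
open scoped Classical
open Finset

/-! The weight of `u` under a labelling `ℓ` by `1, …, n` is `n(n+1)/2` minus the sum of `ℓ`
over the closed neighbourhood of `u` in `Gᶜ`, so `G` is distance magic iff these closed sums are
constant. A universal vertex is isolated in `Gᶜ`, which forces the constant to be its label, and
that label must be `n`. Downward induction on the label then shows that the other edges of `Gᶜ`
are exactly the pairs `{k, n - k}`: if a `Gᶜ`-neighbour `x` of `u` had `ℓ u + ℓ x < n`, the
vertex labelled `n - ℓ x` would be a second `Gᶜ`-neighbour of `x`, and the closed sum at `x`
would exceed `n`. A vertex labelled `n / 2` would have to be paired with itself, so `n` is odd;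
conversely, labelling `(K_{n-1} - M) + K_1` so that `M` pairs complementary labels makes every
closed sum equal to `n`. -/

namespace SimpleGraph

variable {V : Type*} [Fintype V]

lemma wsum_add_wsum_compl (G : SimpleGraph V) (ℓ : V → ℕ) (u : V) :
    wsum G ℓ u + (ℓ u + wsum Gᶜ ℓ u) = ∑ x, ℓ x := by
  have hnot : univ.filter (fun w => ¬G.Adj u w) =
      insert u (univ.filter (fun w => Gᶜ.Adj u w)) := by
    ext w
    by_cases hw : u = w
    · subst hw; simp
    · simp [compl_adj, hw, Ne.symm hw]
  rw [wsum, wsum, ← sum_filter_add_sum_filter_not univ (fun w => G.Adj u w), hnot,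
    sum_insert (by simp)]
  -- the two sides differ only in the `Decidable` instances of the filters
  convert rfl

lemma wsum_eq_zero_of_isIsolated {G : SimpleGraph V} {u : V} (hu : G.IsIsolated u)
    (ℓ : V → ℕ) : wsum G ℓ u = 0 := by
  simp [wsum, filter_false_of_mem fun w _ => hu w]

lemma le_wsum_of_adj {G : SimpleGraph V} (ℓ : V → ℕ) {u x : V} (hx : G.Adj u x) :
    ℓ x ≤ wsum G ℓ u :=
  single_le_sum (fun _ _ => Nat.zero_le _) (by simpa using hx)

lemma add_le_wsum_of_adj {G : SimpleGraph V} (ℓ : V → ℕ) {u x y : V} (hx : G.Adj u x)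
    (hy : G.Adj u y) (hxy : x ≠ y) : ℓ x + ℓ y ≤ wsum G ℓ u := by
  rw [← sum_pair hxy]
  refine sum_le_sum_of_subset fun z hz => ?_
  rcases mem_insert.1 hz with rfl | hz
  · simpa using hx
  · simpa [mem_singleton.1 hz] using hy

lemma exists_adj_of_wsum_ne_zero {G : SimpleGraph V} {ℓ : V → ℕ} {u : V}
    (h : wsum G ℓ u ≠ 0) : ∃ x, G.Adj u x := by
  obtain ⟨x, hx, -⟩ := exists_ne_zero_of_sum_ne_zero h
  exact ⟨x, by simpa using hx⟩

end SimpleGraph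

lemma IsDistanceMagic.of_iso {V W : Type*} [Fintype V] [Fintype W] {G : SimpleGraph V}
    {H : SimpleGraph W} (e : G ≃g H) (hH : IsDistanceMagic H) : IsDistanceMagic G := by
  obtain ⟨f, c, hf⟩ := hH
  refine ⟨e.toEquiv.trans (f.trans (finCongr (Fintype.card_congr e.toEquiv).symm)), c,
    fun u => ?_⟩
  rw [← hf (e u), wsum, wsum]
  exact sum_equiv e.toEquiv (fun _ => by simpa using e.map_adj_iff.symm) (by simp)

namespace SimpleGraph

variable {V : Type*} [Fintype V] {H : SimpleGraph V} {ℓ : V → ℕ} {n : ℕ}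

section ClosedSum

variable (hinj : Function.Injective ℓ) (hpos : ∀ x, 0 < ℓ x)
  (hsum : ∀ u, ℓ u + wsum H ℓ u = n)
include hinj hpos hsum

lemma adj_iff_add_eq_of_forall_adj_le {u : V} (hu : ∀ x, H.Adj u x → n ≤ ℓ u + ℓ x) (w : V) :
    H.Adj u w ↔ ℓ u + ℓ w = n := by
  have hu_sum := hsum u
  refine ⟨fun hw => le_antisymm (by linarith [le_wsum_of_adj ℓ hw]) (hu w hw), fun hw => ?_⟩
  obtain ⟨x, hx⟩ := exists_adj_of_wsum_ne_zero (G := H) (ℓ := ℓ) (u := u)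
    (by linarith [hpos w])
  have : ℓ x = ℓ w := by linarith [le_wsum_of_adj ℓ hx, hu x hx]
  exact hinj this ▸ hx

variable (hsurj : ∀ k, 0 < k → k < n → ∃ x, ℓ x = k)
include hsurj

lemma adj_iff_add_eq_of_le_two_mul {u : V} (hu : n ≤ 2 * ℓ u) (w : V) :
    H.Adj u w ↔ ℓ u + ℓ w = n := by
  induction hk : n - ℓ u using Nat.strong_induction_on generalizing u w with
  | _ k ih =>
  refine adj_iff_add_eq_of_forall_adj_le hinj hpos hsum (fun x hx => ?_) w
  by_contra! hlt
  have := hsum u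
  have := hsum x
  have := hpos x
  obtain ⟨u', hu'⟩ := hsurj (n - ℓ x) (by omega) (by omega)
  have hu'x : H.Adj x u' :=
    ((ih (n - ℓ u') (by omega) (by omega) x rfl).2 (by omega)).symm
  have := add_le_wsum_of_adj ℓ hx.symm hu'x (by rintro rfl; omega)
  omega

theorem adj_iff_add_eq (u w : V) : H.Adj u w ↔ ℓ u + ℓ w = n := by
  rcases le_or_gt n (2 * ℓ u) with hu | hu
  · exact adj_iff_add_eq_of_le_two_mul hinj hpos hsum hsurj hu w
  have := hpos u
  have := hsum u
  obtain ⟨u', hu'⟩ := hsurj (n - ℓ u) (by omega) (by omega)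
  have hu'u : H.Adj u u' :=
    ((adj_iff_add_eq_of_le_two_mul hinj hpos hsum hsurj (by omega) u).2 (by omega)).symm
  refine adj_iff_add_eq_of_forall_adj_le hinj hpos hsum (fun x hx => ?_) w
  by_contra! hlt
  have := hpos x
  have := add_le_wsum_of_adj ℓ hx hu'u (by rintro rfl; omega)
  omega

end ClosedSum

end SimpleGraph

/-- `(K_{n-1} - M) + K_1` written in the labels of its distance magic labelling: vertex `i`
carries label `i + 1`, the vertex labelled `n` is the apex and `M` pairs the labels `k` and
`n - k`. -/
def labelSumNeGraph (n : ℕ) : SimpleGraph (Fin n) where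
  Adj i j := i ≠ j ∧ (i : ℕ) + j + 2 ≠ n
  symm := ⟨fun _ _ h => ⟨h.1.symm, by omega⟩⟩
  loopless := ⟨fun _ h => h.1 rfl⟩

lemma labelSumNeGraph_isDistanceMagic {n : ℕ} (hn : Odd n) :
    IsDistanceMagic (labelSumNeGraph n) := by
  obtain ⟨m, rfl⟩ := hn
  refine ⟨finCongr (Fintype.card_fin _).symm,
    ∑ x : Fin (2 * m + 1), ((x : ℕ) + 1) - (2 * m + 1), fun u => ?_⟩
  have hsplit := (labelSumNeGraph (2 * m + 1)).wsum_add_wsum_compl (fun v => (v : ℕ) + 1) u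
  have hadj : ∀ j, (labelSumNeGraph (2 * m + 1))ᶜ.Adj u j ↔ (u : ℕ) + j + 2 = 2 * m + 1 := by
    intro j
    simp only [SimpleGraph.compl_adj, labelSumNeGraph, Ne, Fin.ext_iff]
    omega
  have hclosed : (u : ℕ) + 1 + wsum (labelSumNeGraph (2 * m + 1))ᶜ (fun v => (v : ℕ) + 1) u
      = 2 * m + 1 := by
    by_cases hu : (u : ℕ) = 2 * m
    · rw [wsum, sum_eq_zero fun j hj => absurd ((hadj j).1 (by simpa using hj)) (by omega)]
      omega
    · rw [wsum, sum_eq_single_of_mem (⟨2 * m - 1 - u, by omega⟩ : Fin (2 * m + 1))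
        (by simp only [mem_filter, mem_univ, true_and, hadj]; omega)
        fun j hj hne => absurd ((hadj j).1 (by simpa using hj))
          (by simp [Fin.ext_iff] at hne; omega)]
      dsimp only
      omega
  simp only [finCongr_apply, Fin.val_cast]
  omega

/-- The distance magic labelling of `calG`, shifted down by one: the apex `0` gets label `n`
and the matched pair `{i, i + m}` gets the labels `i` and `n - i`. -/
def calGLabel (m i : ℕ) : ℕ :=
  if i = 0 then 2 * m else if i ≤ m then i - 1 else 3 * m - i

lemma calG_adj_iff {m : ℕ} (i j : Fin (2 * m + 1)) :
    (calG (2 * m + 1)).Adj i j ↔ i ≠ j ∧ calGLabel m i + calGLabel m j + 2 ≠ 2 * m + 1 := by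
  have hmod : ∀ a : ℕ, a < 2 * m → (a + m) % (2 * m) = if a < m then a + m else a - m := by
    intro a ha
    split_ifs with h
    · exact Nat.mod_eq_of_lt (by omega)
    · rw [Nat.mod_eq_sub_mod (by omega), Nat.mod_eq_of_lt (by omega)]
      omega
  have hi := hmod (i - 1)
  have hj := hmod (j - 1)
  have := i.isLt
  have := j.isLt
  simp only [calG, SimpleGraph.fromRel_adj, calGLabel, Ne, Fin.ext_iff,
    show 2 * m + 1 - 1 = 2 * m by omega, show 2 * m / 2 = m by omega]
  split_ifs at * <;> omega

lemma nonempty_calG_iso {n : ℕ} (hn : Odd n) : Nonempty (calG n ≃g labelSumNeGraph n) := by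
  obtain ⟨m, rfl⟩ := hn
  have hlabel : ∀ i j : Fin (2 * m + 1), calGLabel m i = calGLabel m j ↔ i = j := by
    intro i j
    have := i.isLt
    have := j.isLt
    rw [Fin.ext_iff, calGLabel, calGLabel]
    split_ifs <;> omega
  have hinj : Function.Injective fun i : Fin (2 * m + 1) =>
      (⟨calGLabel m i, by unfold calGLabel; split_ifs <;> omega⟩ : Fin (2 * m + 1)) :=
    fun i j h => (hlabel i j).1 (Fin.val_eq_of_eq h)
  exact ⟨⟨Equiv.ofBijective _ (Finite.injective_iff_bijective.mp hinj), fun {i j} => by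
    simp [labelSumNeGraph, calG_adj_iff, hlabel]⟩⟩

lemma exists_apply_add_one_eq {V : Type*} {N k : ℕ} (f : V ≃ Fin N) (hk : 0 < k) (hkN : k ≤ N) :
    ∃ x, (f x : ℕ) + 1 = k :=
  ⟨f.symm ⟨k - 1, by omega⟩, by simp only [Equiv.apply_symm_apply]; omega⟩

namespace SimpleGraph

variable {V : Type*} [Fintype V] {G : SimpleGraph V}

lemma add_wsum_compl_eq_card_of_isUniversal (f : V ≃ Fin (Fintype.card V)) {c : ℕ}
    (hc : ∀ u, wsum G (fun x => (f x : ℕ) + 1) u = c) {v : V} (hv : G.IsUniversal v) (u : V) :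
    (f u : ℕ) + 1 + wsum Gᶜ (fun x => (f x : ℕ) + 1) u = Fintype.card V := by
  set ℓ : V → ℕ := fun x => (f x : ℕ) + 1
  have hv0 : wsum Gᶜ ℓ v = 0 :=
    wsum_eq_zero_of_isIsolated (isUniversal_compl_iff_isIsolated.1 (by rwa [compl_compl])) ℓ
  have hclosed : ∀ u, ℓ u + wsum Gᶜ ℓ u = ℓ v := fun u => by
    have := wsum_add_wsum_compl G ℓ u
    have := wsum_add_wsum_compl G ℓ v
    have := hc u
    have := hc v
    omega
  have hv_le : ℓ v ≤ Fintype.card V := (f v).isLt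
  obtain ⟨x, hx⟩ : ∃ x, ℓ x = Fintype.card V :=
    exists_apply_add_one_eq f (Fintype.card_pos_iff.2 ⟨v⟩) le_rfl
  have := hclosed x
  rw [hclosed u]
  omega

end SimpleGraph

open SimpleGraph in
theorem IsDistanceMagic.odd_card_and_nonempty_iso {V : Type*} [Fintype V] {G : SimpleGraph V}
    (hG : IsDistanceMagic G) {v : V} (hv : G.IsUniversal v) :
    Odd (Fintype.card V) ∧ Nonempty (G ≃g labelSumNeGraph (Fintype.card V)) := by
  set N := Fintype.card V
  obtain ⟨f, c, hc⟩ := hG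
  set ℓ : V → ℕ := fun x => (f x : ℕ) + 1
  have hsurj : ∀ k, 0 < k → k ≤ N → ∃ x, ℓ x = k := fun _ => exists_apply_add_one_eq f
  have hadj : ∀ u w, Gᶜ.Adj u w ↔ ℓ u + ℓ w = N :=
    adj_iff_add_eq (fun x y h => f.injective (Fin.ext (by simpa [ℓ] using h)))
      (fun _ => Nat.succ_pos _) (add_wsum_compl_eq_card_of_isUniversal f hc hv)
      (fun k hk hkN => hsurj k hk hkN.le)
  refine ⟨Nat.odd_iff.2 (by_contra fun heven => ?_), ⟨⟨f, fun {a b} => ?_⟩⟩⟩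
  · have hN : 0 < N := Fintype.card_pos_iff.2 ⟨v⟩
    obtain ⟨x, hx⟩ := hsurj (N / 2) (by omega) (by omega)
    exact Gᶜ.irrefl ((hadj x x).2 (by omega))
  · simp only [labelSumNeGraph, Ne, f.injective.eq_iff]
    by_cases hab : a = b
    · simp [hab]
    have h : ¬G.Adj a b ↔ ℓ a + ℓ b = N := by simpa [compl_adj, hab] using hadj a b
    rw [← not_iff_not, not_and_or, not_not, not_not, h]
    simp only [hab, false_or, ℓ]
    omega

/-- (K_{n-1} - M) + K_1 is distance magic for n odd, and a graph on n
vertices with maximum degree n-1 is distance magic iff n is odd and it is isomorphic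
to (K_{n-1} - M) + K_1. -/
theorem maxdeg_distance_magic_characterization :
    (∀ n : ℕ, 3 ≤ n → Odd n → IsDistanceMagic (calG n)) ∧
    (∀ (n : ℕ) (G : SimpleGraph (Fin n)), 1 ≤ n →
      (∃ v, (Finset.univ.filter (fun w => G.Adj v w)).card = n - 1) →
      (IsDistanceMagic G ↔ (Odd n ∧ Nonempty (G ≃g calG n)))) := by
  refine ⟨fun n _ hn => ?_, fun n G _ ⟨v, hv⟩ => ?_⟩
  · obtain ⟨e⟩ := nonempty_calG_iso hn
    exact .of_iso e (labelSumNeGraph_isDistanceMagic hn)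
  have hv : G.IsUniversal v := by
    rw [← G.degree_eq_card_sub_one, ← SimpleGraph.card_neighborFinset_eq_degree,
      SimpleGraph.neighborFinset_eq_filter, Fintype.card_fin]
    convert hv
  constructor
  · intro hG
    obtain ⟨hodd, ⟨e⟩⟩ := hG.odd_card_and_nonempty_iso hv
    rw [Fintype.card_fin] at hodd e
    obtain ⟨e'⟩ := nonempty_calG_iso hodd
    exact ⟨hodd, ⟨e.trans e'.symm⟩⟩
  · rintro ⟨hodd, ⟨e⟩⟩
    obtain ⟨e'⟩ := nonempty_calG_iso hodd
    exact .of_iso (e.trans e') (labelSumNeGraph_isDistanceMagic hodd)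
end

section
/- If G is an r-regular graph on n vertices with r even, n even, and d odd, then G is not (a,d)-distance antimagic for any integer a. -/
open scoped Classical
open Finset

/-
The total weight of a labeling counts every label once per neighbour, so for an `r`-regular graph
on `n` vertices it is `r n (n+1) / 2`. If the weights are `a, a+d, …, a+(n-1)d` the total is also
`n (2a + (n-1)d) / 2`, whence `r (n+1) = 2a + (n-1)d`. For even `r` and `n` and odd `d` the left
side is even and the right side odd.
-/

theorem IsRegularDeg.sum_wsum {V : Type*} [Fintype V] {G : SimpleGraph V} {r : ℕ}
    (hreg : IsRegularDeg G r) (f : V → ℕ) : ∑ u, wsum G f u = r * ∑ v, f v := by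
  calc ∑ u, wsum G f u
      = ∑ u, ∑ v, if G.Adj u v then f v else 0 := by simp only [wsum, sum_filter]
    _ = ∑ v, ∑ u, if G.Adj v u then f v else 0 := by
        rw [sum_comm]; simp only [SimpleGraph.adj_comm]
    _ = ∑ v, r * f v := by
        refine sum_congr rfl fun v _ => ?_
        rw [← sum_filter, Finset.sum_const, smul_eq_mul, hreg v]
    _ = r * ∑ v, f v := (mul_sum ..).symm

theorem sum_eq_sum_of_image_univ_eq {α β M : Type*} [Fintype α] [Fintype β] [DecidableEq M]
    [AddCommMonoid M] {f : α → M} {g : β → M} (hg : Function.Injective g)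
    (hcard : Fintype.card α = Fintype.card β) (h : univ.image f = univ.image g) :
    ∑ x, f x = ∑ y, g y := by
  have hf : Set.InjOn f (univ : Finset α) := by
    refine injOn_of_card_image_eq ?_
    rw [h, card_image_of_injective _ hg, card_univ, card_univ, hcard]
  calc ∑ x, f x = ∑ m ∈ univ.image f, m := by rw [sum_image hf]
    _ = ∑ m ∈ univ.image g, m := by rw [h]
    _ = ∑ y, g y := sum_image fun _ _ _ _ hxy => hg hxy

theorem Fin.two_mul_sum_val_succ (n : ℕ) : 2 * ∑ i : Fin n, ((i : ℕ) + 1) = n * (n + 1) := by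
  have hshift := sum_range_succ' (fun i => i) n
  have hgauss := sum_range_id_mul_two (n + 1)
  rw [Fin.sum_univ_eq_sum_range (· + 1)]
  simp only [add_zero, Nat.add_sub_cancel] at hshift hgauss
  rw [hshift] at hgauss
  linarith

theorem Fin.two_mul_sum_arithmetic (n a d : ℕ) :
    2 * ∑ i : Fin n, (a + (i : ℕ) * d) = n * (2 * a + (n - 1) * d) := by
  rw [Fin.sum_univ_eq_sum_range (a + · * d), sum_add_distrib, Finset.sum_const, card_range,
    smul_eq_mul, ← sum_mul, mul_add, mul_add n, ← mul_assoc n (n - 1), ← sum_range_id_mul_two]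
  ring

theorem IsDistAntimagic.mul_card_succ_eq {V : Type*} [Fintype V] [Nonempty V]
    {G : SimpleGraph V} {r a d : ℕ} (hreg : IsRegularDeg G r) (hd : d ≠ 0)
    (h : IsDistAntimagic G a d) :
    r * (Fintype.card V + 1) = 2 * a + (Fintype.card V - 1) * d := by
  obtain ⟨f, hf⟩ := h
  have htarget_inj : Function.Injective fun i : Fin (Fintype.card V) => a + (i : ℕ) * d :=
    fun i j hij =>
      Fin.ext <| Nat.eq_of_mul_eq_mul_right (Nat.pos_of_ne_zero hd) (Nat.add_left_cancel hij)
  have htotal : ∑ u, wsum G (fun v => (f v : ℕ) + 1) u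
      = ∑ i : Fin (Fintype.card V), (a + (i : ℕ) * d) :=
    sum_eq_sum_of_image_univ_eq htarget_inj (Fintype.card_fin _).symm hf
  have hlabels : 2 * ∑ v, ((f v : ℕ) + 1) = Fintype.card V * (Fintype.card V + 1) := by
    rw [f.sum_comp (fun i : Fin _ => (i : ℕ) + 1), Fin.two_mul_sum_val_succ]
  refine Nat.eq_of_mul_eq_mul_left (Fintype.card_pos (α := V)) ?_
  rw [← Fin.two_mul_sum_arithmetic, ← htotal, hreg.sum_wsum, mul_left_comm 2 r, hlabels]
  ring

/-- an r-regular graph on n vertices with r even, n even, d odd is not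
(a,d)-distance antimagic. -/
theorem even_regular_not_antimagic_odd_d {V : Type*} [Fintype V] [Nonempty V]
    (G : SimpleGraph V) (r a d : ℕ) (hr : Even r) (hn : Even (Fintype.card V))
    (hd : Odd d) (hreg : IsRegularDeg G r) : ¬ IsDistAntimagic G a d := by
  intro h
  have hn_pred : Odd (Fintype.card V - 1) := Nat.Even.sub_odd Fintype.card_pos hn odd_one
  have hlhs : Even (r * (Fintype.card V + 1)) := hr.mul_right _
  rw [h.mul_card_succ_eq hreg hd.pos.ne'] at hlhs
  exact Nat.not_even_iff_odd.mpr ((even_two_mul a).add_odd (hn_pred.mul hd)) hlhs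
end
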